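/- arXiv:1704.03680 — 2 statements merged into one kernel-verified Lean document; each statement's English description precedes it below -/
import Mathlib

section
/- Let Φ : P → P be a linear shift, i.e. the K-algebra homomorphism determined by Φ(xᵢ) = aᵢxᵢ + bᵢ with aᵢ ∈ K ∖ {0} and bᵢ ∈ K for i = 1,…,n, and let I ⊆ P be an ideal. Then for every monomial order σ, LT_σ(Ideal.map Φ I) = LT_σ(I). In particular, I and Φ(I) have the same leading term ideal for every monomial order, hence the same GFan number. -/
open MvPolynomial

/-- The leading monomial (σ-largest exponent vector in the support) of a polynomial. -/
noncomputable def leadMonomial {n : ℕ} {K : Type*} [Field K]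
    (m : MonomialOrder (Fin n)) (f : MvPolynomial (Fin n) K) : Fin n →₀ ℕ :=
  m.toSyn.symm (f.support.sup fun s => m.toSyn s)

/-- The leading term ideal of an ideal. -/
noncomputable def leadTermIdeal {n : ℕ} {K : Type*} [Field K]
    (m : MonomialOrder (Fin n)) (I : Ideal (MvPolynomial (Fin n) K)) :
    Ideal (MvPolynomial (Fin n) K) :=
  Ideal.span {g | ∃ f ∈ I, f ≠ 0 ∧ g = monomial (leadMonomial m f) (1 : K)}

/-!
Write `Φ(X^v) = ∏ᵢ (aᵢXᵢ + bᵢ)^{vᵢ}`. Each factor has leading monomial `Xᵢ`, so `Φ(X^v)` has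
leading monomial `X^v` for every monomial order. Expanding `f = ∑ c_v X^v`, the images of the
monomials of `f` have pairwise distinct leading monomials, so the largest one, that of `f`, survives:
`Φ` preserves leading monomials and is injective. It is also surjective, with inverse the shift
`Xᵢ ↦ aᵢ⁻¹(Xᵢ - bᵢ)`, so the nonzero elements of `Φ(I)` are the images of those of `I` and have the
same leading monomials.
-/

open scoped MonomialOrder

namespace MvPolynomial

theorem coeff_linearMap_apply {σ R : Type*} [CommSemiring R]
    (L : MvPolynomial σ R →ₗ[R] MvPolynomial σ R) (f : MvPolynomial σ R) (d : σ →₀ ℕ) :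
    (L f).coeff d = ∑ v ∈ f.support, f.coeff v * (L (monomial v 1)).coeff d := by
  conv_lhs => rw [f.as_sum, map_sum, coeff_sum]
  refine Finset.sum_congr rfl fun v _ => ?_
  have hv : monomial v (f.coeff v) = f.coeff v • monomial v (1 : R) := by
    rw [smul_monomial, smul_eq_mul, mul_one]
  rw [hv, map_smul, coeff_smul, smul_eq_mul]

theorem algHom_monomial_one {σ R : Type*} [CommSemiring R]
    (Φ : MvPolynomial σ R →ₐ[R] MvPolynomial σ R) (v : σ →₀ ℕ) :
    Φ (monomial v 1) = ∏ i ∈ v.support, Φ (X i) ^ v i := by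
  rw [monomial_eq, C_1, one_mul, Finsupp.prod, map_prod]
  simp only [map_pow]

end MvPolynomial

namespace MonomialOrder

variable {σ R : Type*} {m : MonomialOrder σ}

section CommSemiring

variable [CommSemiring R] {L : MvPolynomial σ R →ₗ[R] MvPolynomial σ R}

theorem degree_linearMap_apply_le (hL : ∀ v, m.degree (L (monomial v 1)) = v)
    (f : MvPolynomial σ R) : m.degree (L f) ≼[m] m.degree f := by
  refine degree_le_iff.mpr fun d hd => ?_
  rw [mem_support_iff, coeff_linearMap_apply] at hd
  obtain ⟨v, hv, hne⟩ := Finset.exists_ne_zero_of_sum_ne_zero hd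
  calc m.toSyn d ≤ m.toSyn (m.degree (L (monomial v 1))) :=
        le_degree (mem_support_iff.mpr (right_ne_zero_of_mul hne))
    _ = m.toSyn v := by rw [hL]
    _ ≤ m.toSyn (m.degree f) := le_degree hv

theorem coeff_degree_linearMap_apply (hL : ∀ v, m.degree (L (monomial v 1)) = v)
    (f : MvPolynomial σ R) :
    (L f).coeff (m.degree f)
      = m.leadingCoeff f * m.leadingCoeff (L (monomial (m.degree f) 1)) := by
  rw [coeff_linearMap_apply, leadingCoeff, leadingCoeff, hL]
  refine Finset.sum_eq_single _ (fun v hv hvd => ?_) (fun hd => ?_)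
  · have hlt : m.toSyn v < m.toSyn (m.degree f) :=
      lt_of_le_of_ne (le_degree hv) (m.toSyn.injective.ne hvd)
    rw [coeff_eq_zero_of_lt (f := L (monomial v 1)) (by rwa [hL]), mul_zero]
  · rw [notMem_support_iff.mp hd, zero_mul]

theorem algHom_X_ne_zero {Φ : MvPolynomial σ R →ₐ[R] MvPolynomial σ R}
    (hX : ∀ i, m.degree (Φ (X i)) = Finsupp.single i 1) (i : σ) :
    Φ (X i) ≠ 0 :=
  ne_zero_of_degree_ne_zero (by rw [hX]; exact Finsupp.single_ne_zero.mpr one_ne_zero)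

end CommSemiring

section NoZeroDivisors

variable [CommSemiring R] [NoZeroDivisors R] {L : MvPolynomial σ R →ₗ[R] MvPolynomial σ R}

theorem coeff_degree_linearMap_apply_ne_zero (hL : ∀ v, m.degree (L (monomial v 1)) = v)
    (hL₀ : ∀ v, L (monomial v 1) ≠ 0) {f : MvPolynomial σ R} (hf : f ≠ 0) :
    (L f).coeff (m.degree f) ≠ 0 := by
  rw [coeff_degree_linearMap_apply hL]
  exact mul_ne_zero (leadingCoeff_ne_zero_iff.mpr hf) (leadingCoeff_ne_zero_iff.mpr (hL₀ _))

theorem degree_linearMap_apply (hL : ∀ v, m.degree (L (monomial v 1)) = v)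
    (hL₀ : ∀ v, L (monomial v 1) ≠ 0) (f : MvPolynomial σ R) : m.degree (L f) = m.degree f := by
  rcases eq_or_ne f 0 with rfl | hf
  · rw [map_zero]
  refine m.toSyn.injective (le_antisymm (degree_linearMap_apply_le hL f) (le_degree ?_))
  exact mem_support_iff.mpr (coeff_degree_linearMap_apply_ne_zero hL hL₀ hf)

end NoZeroDivisors

section Ring

variable [CommRing R] [NoZeroDivisors R] {L : MvPolynomial σ R →ₗ[R] MvPolynomial σ R}

theorem linearMap_injective_of_degree (hL : ∀ v, m.degree (L (monomial v 1)) = v)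
    (hL₀ : ∀ v, L (monomial v 1) ≠ 0) : Function.Injective L := by
  refine (injective_iff_map_eq_zero L).mpr fun f hLf => ?_
  by_contra hf
  exact coeff_degree_linearMap_apply_ne_zero hL hL₀ hf (by rw [hLf, coeff_zero])

end Ring

section IsDomain

variable [CommSemiring R] [IsDomain R] {Φ : MvPolynomial σ R →ₐ[R] MvPolynomial σ R}

theorem algHom_monomial_ne_zero (hX : ∀ i, m.degree (Φ (X i)) = Finsupp.single i 1)
    (v : σ →₀ ℕ) : Φ (monomial v 1) ≠ 0 := by
  rw [algHom_monomial_one]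
  exact Finset.prod_ne_zero_iff.mpr fun i _ => pow_ne_zero _ (algHom_X_ne_zero hX i)

theorem degree_algHom_monomial (hX : ∀ i, m.degree (Φ (X i)) = Finsupp.single i 1)
    (v : σ →₀ ℕ) : m.degree (Φ (monomial v 1)) = v := by
  rw [algHom_monomial_one, degree_prod fun i _ => pow_ne_zero _ (algHom_X_ne_zero hX i)]
  simp only [degree_pow, hX, Finsupp.smul_single_one]
  exact v.sum_single

theorem degree_algHom_apply (hX : ∀ i, m.degree (Φ (X i)) = Finsupp.single i 1)
    (f : MvPolynomial σ R) : m.degree (Φ f) = m.degree f :=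
  degree_linearMap_apply (L := Φ.toLinearMap) (degree_algHom_monomial hX)
    (algHom_monomial_ne_zero hX) f

end IsDomain

theorem algHom_injective_of_degree_X [CommRing R] [IsDomain R]
    {Φ : MvPolynomial σ R →ₐ[R] MvPolynomial σ R}
    (hX : ∀ i, m.degree (Φ (X i)) = Finsupp.single i 1) : Function.Injective Φ :=
  linearMap_injective_of_degree (L := Φ.toLinearMap) (degree_algHom_monomial hX)
    (algHom_monomial_ne_zero hX)

theorem degree_C_mul_X_add_C [CommSemiring R] {a : R} (ha : a ≠ 0) (b : R) (i : σ) :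
    m.degree (C a * X i + C b) = Finsupp.single i 1 := by
  classical
  have hmon : m.degree (C a * X i) = Finsupp.single i 1 := by
    rw [C_mul_X_eq_monomial, degree_monomial, if_neg ha]
  rw [degree_add_of_lt, hmon]
  rw [degree_C, hmon, map_zero, toSyn_lt_iff_ne_zero, Ne, toSyn_eq_zero_iff]
  exact Finsupp.single_ne_zero.mpr one_ne_zero

end MonomialOrder

theorem linearShift_surjective {σ K : Type*} [Field K] {a b : σ → K} (ha : ∀ i, a i ≠ 0)
    {Φ : MvPolynomial σ K →ₐ[K] MvPolynomial σ K} (hΦ : ∀ i, Φ (X i) = C (a i) * X i + C (b i)) :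
    Function.Surjective Φ := by
  set Ψ : MvPolynomial σ K →ₐ[K] MvPolynomial σ K := aeval fun i => C (a i)⁻¹ * (X i - C (b i))
  have hΦΨ : Φ.comp Ψ = AlgHom.id K _ := algHom_ext fun i => by
    rw [AlgHom.comp_apply, aeval_X, map_mul, map_sub, hΦ, algHom_C, algHom_C, algebraMap_eq,
      add_sub_cancel_right, ← mul_assoc, ← C_mul, inv_mul_cancel₀ (ha i), C_1, one_mul,
      AlgHom.id_apply]
  exact fun p => ⟨Ψ p, by rw [← AlgHom.comp_apply, hΦΨ, AlgHom.id_apply]⟩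

theorem leadMonomial_eq_degree {n : ℕ} {K : Type*} [Field K] (m : MonomialOrder (Fin n))
    (f : MvPolynomial (Fin n) K) : leadMonomial m f = m.degree f :=
  rfl

theorem leadTermIdeal_map_of_bijective {n : ℕ} {K : Type*} [Field K] (m : MonomialOrder (Fin n))
    (I : Ideal (MvPolynomial (Fin n) K)) {Φ : MvPolynomial (Fin n) K →+* MvPolynomial (Fin n) K}
    (hΦ : Function.Bijective Φ) (hdeg : ∀ f, m.degree (Φ f) = m.degree f) :
    leadTermIdeal m (I.map Φ) = leadTermIdeal m I := by
  unfold leadTermIdeal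
  congr 1
  ext g
  simp only [Set.mem_ofPred_eq, Ideal.mem_map_iff_of_surjective Φ hΦ.2, leadMonomial_eq_degree]
  constructor
  · rintro ⟨_, ⟨f, hf, rfl⟩, hf₀, rfl⟩
    exact ⟨f, hf, fun h => hf₀ (by rw [h, map_zero]), by rw [hdeg]⟩
  · rintro ⟨f, hf, hf₀, rfl⟩
    exact ⟨Φ f, ⟨f, hf, rfl⟩, (map_ne_zero_iff Φ hΦ.1).mpr hf₀, by rw [hdeg]⟩

/-- A linear shift `Xᵢ ↦ aᵢ Xᵢ + bᵢ` (`aᵢ ≠ 0`) preserves the leading term ideal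
for every monomial order; in particular, `I` and `Φ(I)` have the same GFan number. -/
theorem linear_shift_preserves_leading_term_ideal
    {n : ℕ} {K : Type*} [Field K] (a b : Fin n → K) (ha : ∀ i, a i ≠ 0)
    (Φ : MvPolynomial (Fin n) K →ₐ[K] MvPolynomial (Fin n) K)
    (hΦ : ∀ i, Φ (X i) = C (a i) * X i + C (b i))
    (I : Ideal (MvPolynomial (Fin n) K)) (m : MonomialOrder (Fin n)) :
    leadTermIdeal m (Ideal.map (Φ : MvPolynomial (Fin n) K →+* MvPolynomial (Fin n) K) I)
      = leadTermIdeal m I := by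
  have hX : ∀ i, m.degree (Φ (X i)) = Finsupp.single i 1 := fun i => by
    rw [hΦ, MonomialOrder.degree_C_mul_X_add_C (ha i)]
  exact leadTermIdeal_map_of_bijective m I
    ⟨MonomialOrder.algHom_injective_of_degree_X hX, linearShift_surjective ha hΦ⟩
    (MonomialOrder.degree_algHom_apply hX)
end

section
/- Let I ⊆ P be a monomial ideal with minimal monomial generating set {t₁,…,t_s} (the monomials tᵢ generate I and none divides another), let π = (π₁,…,πₙ) where each πᵢ is a sequence of pairwise distinct elements of K, and let D_π(I) = ⟨D_π(t₁),…,D_π(t_s)⟩ be the distraction of I. Then D_π(I) is a radical ideal of P. -/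
/-!
At the grid point `(c₁(b₁), …, cₙ(bₙ))` the distraction of `α` vanishes exactly when `α ≰ b`
(this is where the distinctness of the `cᵢⱼ` enters). So evaluation at grid points is
triangular on distractions, and since the distractions span `P` (multiplication by `Xᵢ` keeps
their span), the ideal generated by the distractions of `T` is exactly the ideal of polynomials
vanishing at the grid points `b` that lie above no element of `T`. That ideal is an intersection
of kernels of evaluations, which are prime, hence it is radical.
-/

open MvPolynomial

/-- The distraction `∏ᵢ ∏_{j<αᵢ} (Xᵢ - c i j)` of the monomial with exponent vector `α`. -/
noncomputable def distraction {n : ℕ} {K : Type*} [Field K]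
    (c : Fin n → ℕ → K) (α : Fin n →₀ ℕ) : MvPolynomial (Fin n) K :=
  ∏ i : Fin n, ∏ j ∈ Finset.range (α i), (X i - C (c i j))

section Distraction

variable {n : ℕ} {K : Type*} [Field K] (c : Fin n → ℕ → K)

@[simp]
lemma distraction_zero : distraction c 0 = 1 := by
  simp [distraction]

lemma distraction_add_single (α : Fin n →₀ ℕ) (i : Fin n) :
    distraction c (α + Finsupp.single i 1) = distraction c α * (X i - C (c i (α i))) := by
  classical
  have hfactor : ∀ i' : Fin n,
      ∏ j ∈ Finset.range ((α + Finsupp.single i 1 : Fin n →₀ ℕ) i'), (X i' - C (c i' j)) =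
        (∏ j ∈ Finset.range (α i'), (X i' - C (c i' j))) *
          if i = i' then X i - C (c i (α i)) else 1 := by
    intro i'
    by_cases h : i = i'
    · subst h; simp [Finset.prod_range_succ]
    · simp [h]
  simp only [distraction, hfactor, Finset.prod_mul_distrib, Finset.prod_ite_eq,
    Finset.mem_univ, if_true]

lemma X_mul_distraction (α : Fin n →₀ ℕ) (i : Fin n) :
    X i * distraction c α =
      distraction c (α + Finsupp.single i 1) + c i (α i) • distraction c α := by
  rw [distraction_add_single, smul_eq_C_mul]
  ring

lemma mem_span_range_distraction (f : MvPolynomial (Fin n) K) :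
    f ∈ Submodule.span K (Set.range (distraction c)) := by
  set M := Submodule.span K (Set.range (distraction c))
  have hX : ∀ i, ∀ m ∈ M, X i * m ∈ M := by
    intro i m hm
    induction hm using Submodule.span_induction with
    | mem _ hd =>
      obtain ⟨α, rfl⟩ := hd
      rw [X_mul_distraction]
      exact M.add_mem (Submodule.subset_span ⟨_, rfl⟩)
        (M.smul_mem _ (Submodule.subset_span ⟨_, rfl⟩))
    | zero => simp
    | add _ _ _ _ h₁ h₂ => rw [mul_add]; exact M.add_mem h₁ h₂
    | smul a _ _ h => rw [mul_smul_comm]; exact M.smul_mem a h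
  have hmul : ∀ p : MvPolynomial (Fin n) K, ∀ m ∈ M, p * m ∈ M := by
    intro p
    induction p using MvPolynomial.induction_on with
    | C a => intro m hm; rw [← smul_eq_C_mul]; exact M.smul_mem a hm
    | add p q hp hq => intro m hm; rw [add_mul]; exact M.add_mem (hp m hm) (hq m hm)
    | mul_X p i hp => intro m hm; rw [mul_assoc]; exact hp _ (hX i m hm)
  simpa using hmul f 1 (Submodule.subset_span ⟨0, distraction_zero c⟩)

lemma distraction_dvd_distraction {α β : Fin n →₀ ℕ} (h : α ≤ β) :
    distraction c α ∣ distraction c β :=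
  Finset.prod_dvd_prod_of_dvd _ _ fun i _ =>
    Finset.prod_dvd_prod_of_subset _ _ _ (Finset.range_subset_range.mpr (h i))

variable {c}

lemma eval_distraction_eq_zero_of_not_le {α b : Fin n →₀ ℕ} (h : ¬ α ≤ b) :
    eval (fun i => c i (b i)) (distraction c α) = 0 := by
  obtain ⟨i, hi⟩ : ∃ i, b i < α i := by simpa [Finsupp.le_def] using h
  simp only [distraction, map_prod]
  exact Finset.prod_eq_zero (Finset.mem_univ i)
    (Finset.prod_eq_zero (Finset.mem_range.mpr hi) (by simp))

lemma eval_distraction_eq_zero_iff (hc : ∀ i, Function.Injective (c i)) (α b : Fin n →₀ ℕ) :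
    eval (fun i => c i (b i)) (distraction c α) = 0 ↔ ¬ α ≤ b := by
  refine ⟨fun h hle => ?_, eval_distraction_eq_zero_of_not_le⟩
  simp only [distraction, map_prod, map_sub, eval_X, eval_C, Finset.prod_eq_zero_iff,
    Finset.mem_univ, Finset.mem_range, sub_eq_zero, true_and] at h
  obtain ⟨i, j, hj, hcij⟩ := h
  exact (hj.trans_le (hle i)).ne (hc i hcij).symm

end Distraction

section Grid

variable {n : ℕ} {K : Type*} [Field K] {c : Fin n → ℕ → K}

lemma eval_eq_zero_of_mem_span_image_distraction
    {S : Set (Fin n →₀ ℕ)} {f : MvPolynomial (Fin n) K} (hf : f ∈ Ideal.span (distraction c '' S))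
    {b : Fin n →₀ ℕ} (hb : ∀ t ∈ S, ¬ t ≤ b) :
    eval (fun i => c i (b i)) f = 0 := by
  have hle : Ideal.span (distraction c '' S) ≤ RingHom.ker (eval fun i => c i (b i)) := by
    rw [Ideal.span_le]
    rintro _ ⟨t, ht, rfl⟩
    exact eval_distraction_eq_zero_of_not_le (hb t ht)
  exact hle hf

lemma eq_zero_of_eval_sum_smul_distraction_eq_zero (hc : ∀ i, Function.Injective (c i))
    {s : Finset (Fin n →₀ ℕ)} {a : (Fin n →₀ ℕ) → K}
    (h : ∀ b ∈ s, eval (fun i => c i (b i)) (∑ α ∈ s, a α • distraction c α) = 0) :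
    ∀ α ∈ s, a α = 0 := by
  by_contra! hne
  -- at the grid point of a minimal `α₀` with `a α₀ ≠ 0`, only the term of `α₀` survives
  obtain ⟨α₀, ⟨hα₀s, hα₀⟩, hmin⟩ := exists_minimal_of_wellFoundedLT (fun α => α ∈ s ∧ a α ≠ 0) hne
  have hdiag := h _ hα₀s
  rw [map_sum, Finset.sum_eq_single_of_mem _ hα₀s] at hdiag
  · rw [smul_eval, mul_eq_zero, eval_distraction_eq_zero_iff hc] at hdiag
    exact hdiag.elim hα₀ (absurd le_rfl)
  · intro α hαs hne
    rw [smul_eval, mul_eq_zero, eval_distraction_eq_zero_iff hc]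
    by_contra! hnz
    exact hne (le_antisymm hnz.2 (hmin ⟨hαs, hnz.1⟩ hnz.2))

lemma mem_span_image_distraction_of_eval_eq_zero (hc : ∀ i, Function.Injective (c i))
    {S : Set (Fin n →₀ ℕ)} {f : MvPolynomial (Fin n) K}
    (hf : ∀ b : Fin n →₀ ℕ, (∀ t ∈ S, ¬ t ≤ b) → eval (fun i => c i (b i)) f = 0) :
    f ∈ Ideal.span (distraction c '' S) := by
  classical
  set J := Ideal.span (distraction c '' S)
  obtain ⟨l, rfl⟩ := Finsupp.mem_span_range_iff_exists_finsupp.mp (mem_span_range_distraction c f)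
  set P : (Fin n →₀ ℕ) → Prop := fun α => ∃ t ∈ S, t ≤ α
  have hsplit := Finset.sum_filter_add_sum_filter_not l.support P fun α => l α • distraction c α
  set good := ∑ α ∈ l.support.filter P, l α • distraction c α
  set bad := l.support.filter (¬ P ·)
  have hgood : good ∈ J := by
    refine J.sum_mem fun α hα => ?_
    obtain ⟨t, ht, htα⟩ := (Finset.mem_filter.mp hα).2
    rw [smul_eq_C_mul]
    exact J.mul_mem_left _ (J.mem_of_dvd (distraction_dvd_distraction c htα)
      (Ideal.subset_span ⟨t, ht, rfl⟩))
  have hbad : ∀ α ∈ bad, l α = 0 := by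
    refine eq_zero_of_eval_sum_smul_distraction_eq_zero hc fun b hb => ?_
    have hout : ∀ t ∈ S, ¬ t ≤ b := fun t ht htb => (Finset.mem_filter.mp hb).2 ⟨t, ht, htb⟩
    have := hf b hout
    rwa [Finsupp.sum, ← hsplit, map_add,
      eval_eq_zero_of_mem_span_image_distraction hgood hout, zero_add] at this
  rwa [Finsupp.sum, ← hsplit, Finset.sum_eq_zero fun α hα => by rw [hbad α hα, zero_smul],
    add_zero]

lemma span_image_distraction_eq_iInf_ker (hc : ∀ i, Function.Injective (c i))
    (S : Set (Fin n →₀ ℕ)) :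
    Ideal.span (distraction c '' S) =
      ⨅ b : {b : Fin n →₀ ℕ // ∀ t ∈ S, ¬ t ≤ b}, RingHom.ker (eval fun i => c i (b.1 i)) := by
  ext f
  simp only [Ideal.mem_iInf, RingHom.mem_ker, Subtype.forall]
  exact ⟨fun hf b hb => eval_eq_zero_of_mem_span_image_distraction hf hb,
    mem_span_image_distraction_of_eval_eq_zero hc⟩

end Grid

theorem distraction_isRadical_general
    {n : ℕ} {K : Type*} [Field K]
    (T : Finset (Fin n →₀ ℕ))
    (c : Fin n → ℕ → K) (hc : ∀ i, Function.Injective (c i)) :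
    (Ideal.span ((distraction c) '' (T : Set (Fin n →₀ ℕ)))).IsRadical := by
  rw [span_image_distraction_eq_iInf_ker hc]
  exact Ideal.isRadical_iInf _ fun b => (RingHom.ker_isPrime _).isRadical

/-- The distraction of a monomial ideal (with respect to sequences of pairwise distinct
elements of `K`) is a radical ideal. -/
theorem distraction_isRadical
    {n : ℕ} {K : Type*} [Field K]
    (T : Finset (Fin n →₀ ℕ))
    (I : Ideal (MvPolynomial (Fin n) K))
    (hgen : I = Ideal.span ((fun t => monomial t (1 : K)) '' (T : Set (Fin n →₀ ℕ))))
    (hmin : ∀ t ∈ T, ∀ t' ∈ T, t ≠ t' → ¬ t ≤ t')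
    (c : Fin n → ℕ → K) (hc : ∀ i, Function.Injective (c i)) :
    (Ideal.span ((distraction c) '' (T : Set (Fin n →₀ ℕ)))).IsRadical :=
  distraction_isRadical_general T c hc
end
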